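/- With F as in the previous context, for each index i the 2×2 Hessian block M_i satisfies: the Schur complement K_i - B_i²/A_i equals (cw/(θ_{0i} - k_i c w)) · (cw - θ_{0i}/k_i), which is strictly negative whenever θ_{0i} > k_i c w > 0. Consequently the full Hessian of F (with respect to the 2d variables, block-diagonal across indices i) is not positive semidefinite at any interior point. -/

import Mathlib

open Real Matrix

/-! The Schur complement of the Hessian block is `(x / (θ - k x)) (x - θ / k)` with `x = c w`,
which is negative on the domain `0 < k x < θ`. Since the `(θ₀, θ₀)` entry is positive, the
determinant of the block is that entry times the Schur complement, hence negative, whereas a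
positive semidefinite matrix has nonnegative determinant. -/

theorem Matrix.not_posSemidef_fin_two_of_schur_neg {a b d : ℝ} (ha : 0 < a)
    (hschur : d - b ^ 2 / a < 0) : ¬ (!![a, b; b, d]).PosSemidef := by
  intro hM
  have hdet : (!![a, b; b, d]).det = a * (d - b ^ 2 / a) := by
    rw [det_fin_two_of]
    field_simp
  have := hM.det_nonneg
  rw [hdet] at this
  exact (mul_neg_of_pos_of_neg ha hschur).not_ge this

section HessianBlock

variable {x θ k : ℝ}

theorem hessian_schur_complement_eq (hx : x ≠ 0) (hk : k ≠ 0) (hθ : θ ≠ 0)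
    (hd : θ - k * x ≠ 0) :
    x ^ 2 / (θ - k * x) - (-x / (θ - k * x)) ^ 2 / (1 / (θ - k * x) - 1 / θ)
      = x / (θ - k * x) * (x - θ / k) := by
  have hA : 1 / (θ - k * x) - 1 / θ = k * x / ((θ - k * x) * θ) := by
    field_simp
    ring
  rw [hA]
  field_simp

theorem hessian_schur_complement_neg (hx : 0 < x) (hk : 0 < k) (hdom : k * x < θ) :
    x / (θ - k * x) * (x - θ / k) < 0 := by
  refine mul_neg_of_pos_of_neg (div_pos hx (sub_pos.mpr hdom)) ?_
  rw [sub_neg, lt_div_iff₀ hk]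
  linarith

end HessianBlock

theorem map_F_hessian_not_posSemidef (c w θ k : ℝ) (hc : 0 < c) (hw : 0 < w)
    (hk : 0 < k) (hdom : k * c * w < θ) :
    (c ^ 2 * w ^ 2 / (θ - k * c * w)
        - (-(c * w) / (θ - k * c * w)) ^ 2 / (1 / (θ - k * c * w) - 1 / θ)
      = (c * w / (θ - k * c * w)) * (c * w - θ / k)) ∧
    ((c * w / (θ - k * c * w)) * (c * w - θ / k) < 0) ∧
    ¬ (Matrix.of !![1 / (θ - k * c * w) - 1 / θ, -(c * w) / (θ - k * c * w);
        -(c * w) / (θ - k * c * w), c ^ 2 * w ^ 2 / (θ - k * c * w)]).PosSemidef := by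
  rw [← mul_pow, mul_assoc k] at *
  set x := c * w
  have hx : 0 < x := mul_pos hc hw
  have hkx : 0 < k * x := mul_pos hk hx
  have hθ : 0 < θ := hkx.trans hdom
  have hd : 0 < θ - k * x := sub_pos.mpr hdom
  have hA : 0 < 1 / (θ - k * x) - 1 / θ := sub_pos.mpr (one_div_lt_one_div_of_lt hd (by linarith))
  have hschur := hessian_schur_complement_eq hx.ne' hk.ne' hθ.ne' hd.ne'
  have hneg := hessian_schur_complement_neg hx hk hdom
  exact ⟨hschur, hneg, not_posSemidef_fin_two_of_schur_neg hA (hschur ▸ hneg)⟩
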